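/- arXiv:2311.01451 — 2 statements merged into one kernel-verified Lean document; each statement's English description precedes it below -/
import Mathlib

section
/- If B is an m×n matrix of rank k, then there exists a column index set J_s of size k and an interpolation matrix T_sr such that B(:, J_r) = B(:, J_s)·T_sr and every entry of T_sr has absolute value at most 1. -/
open Matrix

/-- Existence of a well-conditioned column interpolative decomposition: a real
`m×n` matrix of rank `k` has `k` skeleton columns (the `Sum.inr` part of the
equivalence `e`) and an interpolation matrix `T_sr` with all entries of absolute
value at most 1 such that `B(:,J_r) = B(:,J_s) · T_sr`. -/
theorem stmt3 {m n k : ℕ} (B : Matrix (Fin m) (Fin n) ℝ) (hrank : B.rank = k) :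
    ∃ (e : Fin n ≃ (Fin (n - k) ⊕ Fin k)) (T : Matrix (Fin k) (Fin (n - k)) ℝ),
      B.submatrix id (fun j => e.symm (Sum.inl j)) =
        B.submatrix id (fun j => e.symm (Sum.inr j)) * T ∧
      ∀ i j, |T i j| ≤ 1 := by
  classical
  set V : Submodule ℝ (Fin m → ℝ) := Submodule.span ℝ (Set.range Bᵀ) with hV
  haveI : FiniteDimensional ℝ V := FiniteDimensional.span_of_finite ℝ (Set.finite_range _)
  have hfin : Module.finrank ℝ V = k := by
    rw [← hrank, Matrix.rank_eq_finrank_span_cols]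
    rfl
  let b : Module.Basis (Fin k) ℝ V := Module.finBasisOfFinrankEq ℝ V hfin
  let colV : Fin n → V := fun j => ⟨Bᵀ j, Submodule.subset_span (Set.mem_range_self j)⟩
  let w : Fin n → Fin k → ℝ := fun j => b.equivFun (colV j)
  let Aa : Matrix (Fin m) (Fin k) ℝ := fun i l => ((b l : V) : Fin m → ℝ) i
  have hB : ∀ i j, B i j = ∑ l, Aa i l * w j l := by
    intro i j
    have h1 : (∑ l, w j l • b l : V) = colV j := b.sum_equivFun (colV j)
    have h2 : ((∑ l, w j l • b l : V) : Fin m → ℝ) i = B i j := by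
      rw [h1]; rfl
    rw [← h2]
    push_cast [Submodule.coe_sum]
    rw [Finset.sum_apply]
    simp [mul_comm]
    rfl
  -- span of w is top
  have hspanV : Submodule.span ℝ (Set.range colV) = ⊤ := by
    apply Submodule.map_injective_of_injective V.injective_subtype
    rw [Submodule.map_span, Submodule.map_top, Submodule.range_subtype]
    have : V.subtype '' Set.range colV = Set.range Bᵀ := by
      rw [← Set.range_comp]; rfl
    rw [this, hV]
  have hspanW : Submodule.span ℝ (Set.range w) = ⊤ := by
    have : Set.range w = ⇑(b.equivFun.toLinearMap) '' Set.range colV := by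
      rw [← Set.range_comp]; rfl
    rw [this, ← Submodule.map_span, hspanV, Submodule.map_top]
    exact LinearMap.range_eq_top.2 b.equivFun.surjective
  -- minors
  let M : (Fin k → Fin n) → Matrix (Fin k) (Fin k) ℝ := fun f => Matrix.of fun r l => w (f l) r
  -- a nonzero minor exists
  obtain ⟨t, hts, htsp, htli⟩ := exists_linearIndependent ℝ (Set.range w)
  rw [hspanW] at htsp
  haveI : Fintype t := htli.setFinite.fintype
  have hcard : Fintype.card t = k := by
    have := finrank_span_set_eq_card htli
    rw [htsp] at this
    simp only [finrank_top, Set.toFinset_card] at this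
    simpa [Module.finrank_fintype_fun_eq_card] using this.symm
  let eqt : Fin k ≃ t := (Fintype.equivFinOfCardEq hcard).symm
  have hex : ∀ l : Fin k, ∃ j, w j = (eqt l : Fin k → ℝ) := fun l => hts (eqt l).2
  let f0 : Fin k → Fin n := fun l => (hex l).choose
  have hf0 : ∀ l, w (f0 l) = (eqt l : Fin k → ℝ) := fun l => (hex l).choose_spec
  have hLI : LinearIndependent ℝ (fun l => w (f0 l)) := by
    have : (fun l => w (f0 l)) = (fun x : t => (x : Fin k → ℝ)) ∘ eqt := by
      funext l; simp [hf0 l]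
    rw [this]
    exact htli.comp eqt eqt.injective
  have hD0 : (M f0).det ≠ 0 := by
    have : LinearIndependent ℝ (fun l => (M f0)ᵀ l) := hLI
    have := Matrix.linearIndependent_cols_iff_isUnit.1 this
    rw [Matrix.isUnit_iff_isUnit_det, isUnit_iff_ne_zero] at this
    exact this
  -- choose maximizer
  obtain ⟨f, -, hmax⟩ := Finset.exists_max_image Finset.univ (fun f => |(M f).det|)
    ⟨f0, Finset.mem_univ _⟩
  have hmax' : ∀ g : Fin k → Fin n, |(M g).det| ≤ |(M f).det| :=
    fun g => hmax g (Finset.mem_univ _)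
  have hDf : (M f).det ≠ 0 := by
    intro h
    have := hmax' f0
    rw [h, abs_zero] at this
    exact hD0 (abs_eq_zero.1 (le_antisymm (le_of_le_of_eq (hmax' f0) (by rw [h, abs_zero])) (abs_nonneg _)))
  have hfinj : Function.Injective f := by
    intro a c hac
    by_contra hne
    apply hDf
    exact Matrix.det_zero_of_column_eq hne (fun r => by simp [M, hac])
  -- build the equivalence
  let p : Fin n → Prop := fun x => x ∈ Set.range f
  let er : Fin k ≃ {x // p x} := Equiv.ofInjective f hfinj
  have hcc : Fintype.card {x // ¬ p x} = n - k := by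
    rw [Fintype.card_subtype_compl]
    have : Fintype.card {x // p x} = k := by
      simp only [p]
      rw [Set.card_range_of_injective hfinj, Fintype.card_fin]
    rw [this, Fintype.card_fin]
  let ec : {x // ¬ p x} ≃ Fin (n - k) := Fintype.equivFinOfCardEq hcc
  let e : Fin n ≃ (Fin (n - k) ⊕ Fin k) :=
    (Equiv.sumCompl p).symm.trans ((Equiv.sumComm _ _).trans (Equiv.sumCongr ec er.symm))
  have he : ∀ j, e.symm (Sum.inr j) = f j := by
    intro j
    simp only [e, er, Equiv.symm_trans_apply, Equiv.sumCongr_symm, Equiv.symm_symm,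
      Equiv.sumCongr_apply, Sum.map_inr, Equiv.sumComm_symm, Equiv.sumComm_apply,
      Sum.swap_inr, Equiv.sumCompl_apply_inl]
    rfl
  let g : Fin (n - k) → Fin n := fun j => e.symm (Sum.inl j)
  -- interpolation matrix
  let T : Matrix (Fin k) (Fin (n - k)) ℝ := fun i j => cramer (M f) (w (g j)) i / (M f).det
  refine ⟨e, T, ?_, ?_⟩
  · ext i j
    have hKey : ∀ r, ∑ l, w (f l) r * T l j = w (g j) r := by
      intro r
      have hmv := congrFun (Matrix.mulVec_cramer (M f) (w (g j))) r
      simp only [Matrix.mulVec, dotProduct, Pi.smul_apply, smul_eq_mul] at hmv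
      have : ∑ l, w (f l) r * T l j
          = (∑ l, (M f) r l * cramer (M f) (w (g j)) l) / (M f).det := by
        rw [Finset.sum_div]
        refine Finset.sum_congr rfl fun l _ => ?_
        rw [mul_div_assoc]; rfl
      rw [this, hmv]
      exact mul_div_cancel_left₀ _ hDf
    simp only [Matrix.mul_apply, Matrix.submatrix_apply, id_eq, he]
    calc B i (g j) = ∑ r, Aa i r * w (g j) r := hB i (g j)
      _ = ∑ r, Aa i r * ∑ l, w (f l) r * T l j := by simp_rw [hKey]
      _ = ∑ r, ∑ l, Aa i r * (w (f l) r * T l j) := by simp_rw [Finset.mul_sum]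
      _ = ∑ l, ∑ r, Aa i r * (w (f l) r * T l j) := Finset.sum_comm
      _ = ∑ l, (∑ r, Aa i r * w (f l) r) * T l j := by
            simp_rw [Finset.sum_mul, mul_assoc]
      _ = ∑ l, B i (f l) * T l j := by simp_rw [← hB]
  · intro i j
    have hupd : (M f).updateCol i (w (g j)) = M (Function.update f i (g j)) := by
      ext r l
      rw [Matrix.updateCol_apply]
      by_cases h : l = i <;> simp [M, Function.update, h]
    have hnum : |cramer (M f) (w (g j)) i| ≤ |(M f).det| := by
      rw [Matrix.cramer_apply, hupd]
      exact hmax' _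
    rw [abs_div, div_le_one (abs_pos.2 hDf)]
    exact hnum
end

section
/- Let A be an n×n matrix with 2×2 block partition [[A_bb, A_bf],[A_fb, A_ff]], where the off-diagonal blocks have rank k and share skeleton structure: suppose row ID A_bf([I_r,I_s],:) has interpolation matrix T_rs and column ID A_fb(:,[J_r,J_s]) has interpolation matrix T_sr. Then E⁻¹ A([I_r,I_s,I_f],[J_r,J_s,J_f]) F⁻¹ has zero blocks in the (r,f) and (f,r) positions, where E = elim(T_rs, I_r, I_s, n) and F = elim(T_sr, J_s, J_r, n). -/
open Matrix

/-- A square matrix built from a 3×3 array of blocks, over index blocks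
`ρ` (residual), `σ` (skeleton), `φ` (far field). -/
def fb3 {ρ σ φ R : Type*} (A11 : Matrix ρ ρ R) (A12 : Matrix ρ σ R) (A13 : Matrix ρ φ R)
    (A21 : Matrix σ ρ R) (A22 : Matrix σ σ R) (A23 : Matrix σ φ R)
    (A31 : Matrix φ ρ R) (A32 : Matrix φ σ R) (A33 : Matrix φ φ R) :
    Matrix (ρ ⊕ σ ⊕ φ) (ρ ⊕ σ ⊕ φ) R :=
  Matrix.fromBlocks A11 (Matrix.fromCols A12 A13) (Matrix.fromRows A21 A31)
    (Matrix.fromBlocks A22 A23 A32 A33)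

/-- Skeletonization of the far-field interactions: if the row ID of `A_bf` gives
`A_rf = T_rs A_sf` and the column ID of `A_fb` gives `A_fr = A_fs T_sr`, then
`E⁻¹ A F⁻¹` (with `E = elim(T_rs, I_r, I_s)` and `F = elim(T_sr, J_s, J_r)`,
whose inverses negate the inserted block) has vanishing (r,f) and (f,r) blocks. -/
theorem stmt5 {ρ σ φ R : Type*} [Fintype ρ] [Fintype σ] [Fintype φ]
    [DecidableEq ρ] [DecidableEq σ] [DecidableEq φ] [Field R]
    (Arr : Matrix ρ ρ R) (Ars : Matrix ρ σ R) (Arf : Matrix ρ φ R)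
    (Asr : Matrix σ ρ R) (Ass : Matrix σ σ R) (Asf : Matrix σ φ R)
    (Afr : Matrix φ ρ R) (Afs : Matrix φ σ R) (Aff : Matrix φ φ R)
    (Trs : Matrix ρ σ R) (Tsr : Matrix σ ρ R)
    (hrow : Arf = Trs * Asf) (hcol : Afr = Afs * Tsr) :
    (∀ i j,
      ((fb3 1 (-Trs) 0 0 1 0 0 0 1 *
          fb3 Arr Ars Arf Asr Ass Asf Afr Afs Aff *
          fb3 1 0 0 (-Tsr) 1 0 0 0 1 : Matrix (ρ ⊕ σ ⊕ φ) (ρ ⊕ σ ⊕ φ) R))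
        (Sum.inl i) (Sum.inr (Sum.inr j)) = 0) ∧
    (∀ i j,
      ((fb3 1 (-Trs) 0 0 1 0 0 0 1 *
          fb3 Arr Ars Arf Asr Ass Asf Afr Afs Aff *
          fb3 1 0 0 (-Tsr) 1 0 0 0 1 : Matrix (ρ ⊕ σ ⊕ φ) (ρ ⊕ σ ⊕ φ) R))
        (Sum.inr (Sum.inr i)) (Sum.inl j) = 0) := by
  subst hrow hcol
  constructor <;> intro i j <;>
    simp [fb3, Matrix.mul_apply, Matrix.fromBlocks, Matrix.fromRows_apply_inl, Matrix.fromRows_apply_inr, Matrix.fromCols_apply_inl, Matrix.fromCols_apply_inr,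
      Fintype.sum_sum_type, Finset.mul_sum, Finset.sum_mul, mul_assoc, one_apply,
      Finset.sum_ite_eq, Finset.sum_ite_eq']
end
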